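/- arXiv:1111.2783 — 3 statements merged into one kernel-verified Lean document; each statement's English description precedes it below -/
import Mathlib

section
/- Fix integers k ≥ 1 and m ≥ 1. The number of distinct partitions of the form R_{i_1} ∪ R_{i_2} ∪ ⋯ ∪ R_{i_{m-1}} with i_1, …, i_{m-1} ∈ {1, …, k} equals the binomial coefficient C(m−1+k−1, k−1). -/
open scoped RealInnerProductSpace

/-- The hook length of the cell `c` (0-indexed) in the Young diagram `μ`:
arm + leg + 1 = rowLen c.1 + colLen c.2 - c.1 - c.2 - 1. -/
def YoungDiagram.hook (μ : YoungDiagram) (c : ℕ × ℕ) : ℕ :=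
  μ.rowLen c.1 + μ.colLen c.2 - c.1 - c.2 - 1

/-- A partition is a `t`-core if no cell has hook length `t`. -/
def YoungDiagram.IsCore (μ : YoungDiagram) (t : ℕ) : Prop :=
  ∀ c ∈ μ.cells, μ.hook c ≠ t

/-- `c` is an addable cell of `μ`: it is not in `μ` and inserting it yields a Young diagram. -/
def YoungDiagram.IsAddable (μ : YoungDiagram) (c : ℕ × ℕ) : Prop :=
  c ∉ μ ∧ ∃ ν : YoungDiagram, ν.cells = insert c μ.cells

/-- `c` is a removable cell of `μ`: it is in `μ` and erasing it yields a Young diagram. -/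
def YoungDiagram.IsRemovable (μ : YoungDiagram) (c : ℕ × ℕ) : Prop :=
  c ∈ μ ∧ ∃ ν : YoungDiagram, ν.cells = μ.cells.erase c

/-- The residue mod `k+1` of a cell: its content `c.2 - c.1` taken in `ZMod (k+1)`. -/
def residue (k : ℕ) (c : ℕ × ℕ) : ZMod (k + 1) :=
  (((c.2 : ℤ) - (c.1 : ℤ) : ℤ) : ZMod (k + 1))

/-- The rectangular Young diagram with `r` rows and `c` columns. -/
def rectangle (r c : ℕ) : YoungDiagram where
  cells := Finset.range r ×ˢ Finset.range c
  isLowerSet := by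
    rintro ⟨a, b⟩ ⟨x, y⟩ ⟨h1, h2⟩ h
    simp only [Finset.coe_product, Set.mem_prod, Finset.mem_coe, Finset.mem_range] at *
    exact ⟨lt_of_le_of_lt h1 h.1, lt_of_le_of_lt h2 h.2⟩

/-- The rectangle `R_i = (i^{k-i+1})`, whose largest hook length is `k`. -/
def kRectangle (k i : ℕ) : YoungDiagram := rectangle (k - i + 1) i

/-- The multiset of (nonzero) parts of a Young diagram. -/
def partsOf (μ : YoungDiagram) : Multiset ℕ := (μ.rowLens : Multiset ℕ)

/-- The Young diagram whose parts are the given multiset, sorted into non-increasing order. -/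
def diagramOfParts (s : Multiset ℕ) : YoungDiagram :=
  YoungDiagram.ofRowLens (s.sort (· ≥ ·)) (s.pairwise_sort _).sortedGE

/-- `R_{i_1} ∪ ⋯ ∪ R_{i_{m-1}}`: the partition obtained by combining the parts of
the rectangles `R_i` for `i` ranging over the multiset `S` (with multiplicity). -/
def unionRects (k : ℕ) (S : Multiset ℕ) : YoungDiagram :=
  diagramOfParts ((S.map fun i => partsOf (kRectangle k i)).sum)

/-- The Lapointe–Morse map: the `i`-th entry of `pMap k μ` is the number of cells in
row `i` of `μ` whose hook length is at most `k`. -/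
def pMap (k : ℕ) (μ : YoungDiagram) (i : ℕ) : ℕ :=
  ((Finset.range (μ.rowLen i)).filter fun j => μ.hook (i, j) ≤ k).card

/-- The simple roots of type `A_k` in the standard realization. -/
noncomputable def simpleRoot (k : ℕ) (i : Fin k) : EuclideanSpace ℝ (Fin (k + 1)) :=
  EuclideanSpace.single i.castSucc 1 - EuclideanSpace.single i.succ 1

/-- The highest root `φ = α_1 + ⋯ + α_k` of type `A_k`. -/
noncomputable def highestRoot (k : ℕ) : EuclideanSpace ℝ (Fin (k + 1)) :=
  ∑ i, simpleRoot k i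

/-!
The parts of `R_i` are `k - i + 1` copies of `i`, so in `R_{i_1} ∪ ⋯ ∪ R_{i_{m-1}}` the part `i`
occurs `(k - i + 1)` times as often as `i` occurs among the indices. Hence the union determines the
multiset `{i_1, …, i_{m-1}}`, and we are counting multisets of size `m - 1` drawn from
`{1, …, k}`: stars and bars.
-/

lemma mem_rectangle {r c i j : ℕ} : (i, j) ∈ rectangle r c ↔ i < r ∧ j < c := by
  simp [rectangle, ← YoungDiagram.mem_cells]

lemma rowLen_rectangle {r c i : ℕ} (hi : i < r) : (rectangle r c).rowLen i = c :=
  eq_of_forall_lt_iff fun j => by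
    rw [← YoungDiagram.mem_iff_lt_rowLen, mem_rectangle, and_iff_right hi]

lemma colLen_rectangle {r c j : ℕ} (hj : j < c) : (rectangle r c).colLen j = r :=
  eq_of_forall_lt_iff fun i => by
    rw [← YoungDiagram.mem_iff_lt_colLen, mem_rectangle, and_iff_left hj]

lemma partsOf_rectangle {r c : ℕ} (hc : 0 < c) :
    partsOf (rectangle r c) = Multiset.replicate r c := by
  have hrows : (List.range r).map (rectangle r c).rowLen = List.replicate r c := by
    simp +contextual [List.eq_replicate_iff, rowLen_rectangle]
  rw [partsOf, YoungDiagram.rowLens, colLen_rectangle hc, hrows, Multiset.coe_replicate]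

lemma partsOf_kRectangle {k i : ℕ} (hi : 0 < i) :
    partsOf (kRectangle k i) = Multiset.replicate (k - i + 1) i :=
  partsOf_rectangle hi

lemma partsOf_diagramOfParts {s : Multiset ℕ} (hs : ∀ x ∈ s, 0 < x) :
    partsOf (diagramOfParts s) = s := by
  rw [partsOf, diagramOfParts, YoungDiagram.rowLens_ofRowLens_eq_self
    fun x hx => hs x ((Multiset.mem_sort _).mp hx), Multiset.sort_eq]

lemma partsOf_unionRects (k : ℕ) (S : Multiset ℕ) :
    partsOf (unionRects k S) = (S.map fun i => partsOf (kRectangle k i)).sum := by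
  refine partsOf_diagramOfParts fun x hx => ?_
  obtain ⟨_, hμ, hx⟩ := Multiset.mem_join.mp hx
  obtain ⟨i, -, rfl⟩ := Multiset.mem_map.mp hμ
  exact YoungDiagram.pos_of_mem_rowLens _ x hx

lemma count_partsOf_unionRects {k : ℕ} {S : Multiset ℕ} (hS : ∀ i ∈ S, 0 < i) (j : ℕ) :
    (partsOf (unionRects k S)).count j = (k - j + 1) * S.count j := by
  calc (partsOf (unionRects k S)).count j
      = (S.map fun i => (k - j + 1) * ({i} : Multiset ℕ).count j).sum := by
        rw [partsOf_unionRects, Multiset.count_sum]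
        refine congrArg _ (Multiset.map_congr rfl fun i hi => ?_)
        rw [partsOf_kRectangle (hS i hi), Multiset.count_replicate, Multiset.count_singleton]
        obtain rfl | hij := eq_or_ne i j
        · simp
        · simp [hij, hij.symm]
    _ = (k - j + 1) * S.count j := by
        rw [Multiset.sum_map_mul_left, ← Multiset.count_sum, Multiset.sum_map_singleton]

lemma unionRects_injOn (k : ℕ) : Set.InjOn (unionRects k) {S | ∀ i ∈ S, 0 < i} := by
  intro S hS T hT h
  ext j
  have := congrArg (Multiset.count j ∘ partsOf) h
  simp only [Function.comp_apply, count_partsOf_unionRects hS, count_partsOf_unionRects hT] at this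
  exact Nat.eq_of_mul_eq_mul_left (Nat.succ_pos _) this

lemma Multiset.ncard_setOf_card_eq_and_forall_mem {α : Type*} (s : Set α) (n : ℕ) :
    {S : Multiset α | card S = n ∧ ∀ a ∈ S, a ∈ s}.ncard = (Nat.card s + n - 1).choose n := by
  have hinj : Function.Injective fun t : Sym s n => (t : Multiset s).map Subtype.val :=
    fun t u h => Sym.coe_injective (Multiset.map_injective Subtype.val_injective h)
  have hrange : Set.range (fun t : Sym s n => (t : Multiset s).map Subtype.val) =
      {S : Multiset α | card S = n ∧ ∀ a ∈ S, a ∈ s} := by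
    ext S
    constructor
    · rintro ⟨t, rfl⟩
      refine ⟨by simp, fun a ha => ?_⟩
      obtain ⟨b, -, rfl⟩ := Multiset.mem_map.mp ha
      exact b.2
    · rintro ⟨hcard, hS⟩
      lift S to Multiset s using hS
      exact ⟨⟨S, by simpa using hcard⟩, rfl⟩
  rw [← hrange, Set.ncard_range_of_injective hinj, Sym.natCard_sym_eq_choose]

theorem card_rectangle_unions_general (k m : ℕ) (hk : 1 ≤ k) :
    Set.ncard {lam : YoungDiagram |
        ∃ S : Multiset ℕ, Multiset.card S = m - 1 ∧ (∀ i ∈ S, 1 ≤ i ∧ i ≤ k) ∧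
          lam = unionRects k S} = Nat.choose (m - 1 + (k - 1)) (k - 1) := by
  have hset : {lam : YoungDiagram | ∃ S : Multiset ℕ, Multiset.card S = m - 1 ∧
      (∀ i ∈ S, 1 ≤ i ∧ i ≤ k) ∧ lam = unionRects k S} =
      unionRects k '' {S | Multiset.card S = m - 1 ∧ ∀ i ∈ S, i ∈ Set.Icc 1 k} := by
    ext lam
    simp only [Set.mem_ofPred_eq, Set.mem_image, Set.mem_Icc, eq_comm (a := lam), and_assoc]
  have hinj : Set.InjOn (unionRects k)
      {S | Multiset.card S = m - 1 ∧ ∀ i ∈ S, i ∈ Set.Icc 1 k} :=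
    (unionRects_injOn k).mono fun S hS i hi => (hS.2 i hi).1
  rw [hset, hinj.ncard_image, Multiset.ncard_setOf_card_eq_and_forall_mem,
    show Nat.card (Set.Icc 1 k) = k by simp, show k + (m - 1) - 1 = m - 1 + (k - 1) by omega,
    Nat.choose_symm_add]

/-- For `k ≥ 1` and `m ≥ 1`, the number of distinct partitions of the
form `R_{i_1} ∪ ⋯ ∪ R_{i_{m-1}}` with `i_1, …, i_{m-1} ∈ {1, …, k}` equals the binomial
coefficient `C(m-1+k-1, k-1)`. -/
theorem card_rectangle_unions (k m : ℕ) (hk : 1 ≤ k) (hm : 1 ≤ m) :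
    Set.ncard {lam : YoungDiagram |
        ∃ S : Multiset ℕ, Multiset.card S = m - 1 ∧ (∀ i ∈ S, 1 ≤ i ∧ i ≤ k) ∧
          lam = unionRects k S} = Nat.choose (m - 1 + (k - 1)) (k - 1) :=
  card_rectangle_unions_general k m hk
end

section
/- Fix an integer k ≥ 1. A (k+1)-core cannot have both a removable cell and an addable cell of the same residue: for every (k+1)-core λ and every r ∈ ℤ/(k+1)ℤ, it is not the case that λ has both a removable cell whose content is congruent to r modulo k+1 and an addable cell whose content is congruent to r modulo k+1. -/
open scoped RealInnerProductSpace

/-!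
Encode `μ` by its β-numbers `rowLen i - i - 1`, one per row. A removable cell of content `e`
means that `e` is a β-number and `e - 1` is not; an addable cell of content `w` means that
`w - 1` is a β-number and `w` is not. An integer that is not a β-number has the form
`y - colLen y`, and the cell of row `i` and column `y` then has hook length
`betaNumber i - (y - colLen y)`; so the β-set of a `t`-core is closed under `v ↦ v - t`.
If `e ≡ w (mod t)`, this closure puts `e - 1` (when `e ≤ w`) or `w` (when `w < e`) into the
β-set, a contradiction.
-/

def content (c : ℕ × ℕ) : ℤ := c.2 - c.1

namespace YoungDiagram

def betaNumber (μ : YoungDiagram) (i : ℕ) : ℤ := μ.rowLen i - i - 1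

def betaSet (μ : YoungDiagram) : Set ℤ := Set.range μ.betaNumber

variable {μ : YoungDiagram}

lemma betaNumber_strictAnti (μ : YoungDiagram) : StrictAnti μ.betaNumber := by
  intro i j hij
  have := μ.rowLen_anti i j hij.le
  unfold betaNumber
  omega

lemma exists_betaNumber_lt (μ : YoungDiagram) (v : ℤ) : ∃ n, μ.betaNumber n < v := by
  refine ⟨μ.rowLen 0 + (-v).toNat, ?_⟩
  have := μ.rowLen_anti 0 (μ.rowLen 0 + (-v).toNat) (Nat.zero_le _)
  unfold betaNumber
  omega

lemma exists_hook_eq_of_notMem_betaSet {x t : ℕ} (h : μ.betaNumber x - t ∉ μ.betaSet) :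
    ∃ c ∈ μ.cells, μ.hook c = t := by
  generalize hv : μ.betaNumber x - t = v at h
  have hex := μ.exists_betaNumber_lt v
  -- `x'` is the first row whose β-number lies below the gap `v`; the cell `(x, y)` with
  -- `colLen y = x'` and `y - x' = v` has hook length `t`.
  obtain ⟨x', hbelow, hfirst⟩ : ∃ x', μ.betaNumber x' < v ∧ ∀ z < x', ¬ μ.betaNumber z < v :=
    ⟨Nat.find hex, Nat.find_spec hex, fun _ => Nat.find_min hex⟩
  have hx : x < x' := by
    by_contra! hle
    have := μ.betaNumber_strictAnti.antitone hle
    omega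
  have habove : v < μ.betaNumber (x' - 1) :=
    (not_lt.1 (hfirst _ (by omega))).lt_of_ne fun heq => h ⟨x' - 1, heq.symm⟩
  unfold betaNumber at hv hbelow habove
  obtain ⟨y, hy⟩ : ∃ y : ℕ, (y : ℤ) = v + x' := ⟨(v + x').toNat, by omega⟩
  have hmem : (x' - 1, y) ∈ μ := mem_iff_lt_rowLen.2 (by omega)
  have hcol₁ := mem_iff_lt_colLen.1 hmem
  have hcol₂ : μ.colLen y ≤ x' := not_lt.1 fun hlt => by
    have := mem_iff_lt_rowLen.1 (mem_iff_lt_colLen.2 hlt)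
    omega
  refine ⟨(x, y), (mem_cells _).2 (μ.up_left_mem (by omega) le_rfl hmem), ?_⟩
  show μ.rowLen x + μ.colLen y - x - y - 1 = t
  omega

lemma IsCore.sub_mem_betaSet {t : ℕ} (hμ : μ.IsCore t) {v : ℤ} (hv : v ∈ μ.betaSet) :
    v - t ∈ μ.betaSet := by
  obtain ⟨x, rfl⟩ := hv
  by_contra h
  obtain ⟨c, hc, hhook⟩ := exists_hook_eq_of_notMem_betaSet h
  exact hμ c hc hhook

lemma IsCore.sub_mul_mem_betaSet {t : ℕ} (hμ : μ.IsCore t) {v : ℤ} (hv : v ∈ μ.betaSet)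
    (m : ℕ) : v - t * m ∈ μ.betaSet := by
  induction m with
  | zero => simpa using hv
  | succ m ih =>
    convert hμ.sub_mem_betaSet ih using 1
    push_cast
    ring

lemma IsCore.mem_betaSet_of_modEq {t : ℕ} (hμ : μ.IsCore t) {a b : ℤ} (hab : a ≤ b)
    (hmod : a ≡ b [ZMOD t]) (hb : b ∈ μ.betaSet) : a ∈ μ.betaSet := by
  obtain ⟨n, hn⟩ := Int.eq_ofNat_of_zero_le (sub_nonneg.2 hab)
  obtain ⟨m, rfl⟩ : t ∣ n := Int.natCast_dvd_natCast.1 (hn ▸ hmod.dvd)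
  convert hμ.sub_mul_mem_betaSet hb m using 1
  push_cast at hn
  linarith

lemma IsRemovable.notMem_of_lt {c d : ℕ × ℕ} (hc : μ.IsRemovable c) (hcd : c < d) : d ∉ μ := by
  obtain ⟨-, ν, hν⟩ := hc
  intro hd
  have hdν : d ∈ ν := (mem_cells _).1 (hν ▸ Finset.mem_erase.2 ⟨hcd.ne', hd⟩)
  have hcν : c ∈ ν.cells := ν.up_left_mem hcd.le.1 hcd.le.2 hdν
  simp [hν] at hcν

lemma IsAddable.mem_of_lt {c d : ℕ × ℕ} (hc : μ.IsAddable c) (hdc : d < c) : d ∈ μ := by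
  obtain ⟨-, ν, hν⟩ := hc
  have hcν : c ∈ ν := (mem_cells _).1 (hν ▸ Finset.mem_insert_self c μ.cells)
  have hdν : d ∈ ν.cells := ν.up_left_mem hdc.le.1 hdc.le.2 hcν
  rw [hν, Finset.mem_insert] at hdν
  exact hdν.resolve_left hdc.ne

lemma IsRemovable.rowLen_eq {i j : ℕ} (hc : μ.IsRemovable (i, j)) : μ.rowLen i = j + 1 := by
  have h₁ := mem_iff_lt_rowLen.1 hc.1
  have h₂ := mt mem_iff_lt_rowLen.2 (hc.notMem_of_lt (Prod.mk_lt_mk_iff_right.2 j.lt_succ_self))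
  omega

lemma IsAddable.rowLen_eq {i j : ℕ} (hc : μ.IsAddable (i, j)) : μ.rowLen i = j := by
  have h₁ := mt mem_iff_lt_rowLen.2 hc.1
  by_contra hne
  have := mem_iff_lt_rowLen.1
    (hc.mem_of_lt (Prod.mk_lt_mk_iff_right.2 (show μ.rowLen i < j by omega)))
  omega

lemma IsRemovable.content_mem_betaSet {c : ℕ × ℕ} (hc : μ.IsRemovable c) :
    content c ∈ μ.betaSet :=
  ⟨c.1, by have := hc.rowLen_eq; unfold betaNumber content; omega⟩

lemma IsRemovable.content_sub_one_notMem_betaSet {c : ℕ × ℕ} (hc : μ.IsRemovable c) :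
    content c - 1 ∉ μ.betaSet := by
  obtain ⟨i, j⟩ := c
  rintro ⟨y, hy⟩
  have hrow := hc.rowLen_eq
  unfold betaNumber content at *
  rcases le_or_gt y i with hyi | hiy
  · have := μ.rowLen_anti y i hyi
    omega
  · have := mt mem_iff_lt_rowLen.2 (hc.notMem_of_lt (Prod.mk_lt_mk_iff_left.2 hiy))
    omega

lemma IsAddable.content_sub_one_mem_betaSet {c : ℕ × ℕ} (hc : μ.IsAddable c) :
    content c - 1 ∈ μ.betaSet :=
  ⟨c.1, by have := hc.rowLen_eq; unfold betaNumber content; omega⟩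

lemma IsAddable.content_notMem_betaSet {c : ℕ × ℕ} (hc : μ.IsAddable c) :
    content c ∉ μ.betaSet := by
  obtain ⟨i, j⟩ := c
  rintro ⟨y, hy⟩
  have hrow := hc.rowLen_eq
  unfold betaNumber content at *
  rcases le_or_gt i y with hiy | hyi
  · have := μ.rowLen_anti i y hiy
    omega
  · have := mem_iff_lt_rowLen.1 (hc.mem_of_lt (Prod.mk_lt_mk_iff_left.2 hyi))
    omega

end YoungDiagram

theorem no_removable_and_addable_of_same_residue_general (k : ℕ)
    (lam : YoungDiagram) (hcore : lam.IsCore (k + 1)) (r : ZMod (k + 1)) :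
    ¬ ((∃ c : ℕ × ℕ, lam.IsRemovable c ∧ residue k c = r) ∧
       (∃ c : ℕ × ℕ, lam.IsAddable c ∧ residue k c = r)) := by
  rintro ⟨⟨c, hc, rfl⟩, d, hd, hdc⟩
  have hmod : content c ≡ content d [ZMOD (k + 1 : ℕ)] :=
    (ZMod.intCast_eq_intCast_iff _ _ _).1 (by exact_mod_cast hdc.symm)
  rcases le_or_gt (content c) (content d) with hle | hlt
  · exact hc.content_sub_one_notMem_betaSet <| hcore.mem_betaSet_of_modEq (by omega)
      (hmod.sub_right 1) hd.content_sub_one_mem_betaSet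
  · exact hd.content_notMem_betaSet <|
      hcore.mem_betaSet_of_modEq hlt.le hmod.symm hc.content_mem_betaSet

/-- A `(k+1)`-core cannot have both a removable cell and an addable cell
of the same residue modulo `k+1`. -/
theorem no_removable_and_addable_of_same_residue (k : ℕ) (hk : 1 ≤ k)
    (lam : YoungDiagram) (hcore : lam.IsCore (k + 1)) (r : ZMod (k + 1)) :
    ¬ ((∃ c : ℕ × ℕ, lam.IsRemovable c ∧ residue k c = r) ∧
       (∃ c : ℕ × ℕ, lam.IsAddable c ∧ residue k c = r)) :=
  no_removable_and_addable_of_same_residue_general k lam hcore r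
end

section
/- Fix an integer k ≥ 1. The Lapointe–Morse map 𝔭, which sends a (k+1)-core μ to the sequence whose i-th entry is the number of cells (i,j) in row i of μ with hook length at most k, is a bijection from the set of (k+1)-cores onto the set of k-bounded partitions; in particular, for every (k+1)-core μ the image 𝔭(μ) is a partition (its entries are non-increasing) all of whose parts are at most k. -/
open scoped RealInnerProductSpace

/-!
Encode a Young diagram `μ` by its beta numbers `β i = μ_i - i`, a strictly decreasing sequence
equal to `-i` for large `i`. The integers that are not beta numbers are the co-beta numbers
`j + 1 - μ'_j`, and the hook of the cell `(i, j)` is `β i - (j + 1 - μ'_j)`. Hence `μ` is a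
`(k+1)`-core iff every `β i - (k + 1)` is some `β m`; the `k` integers strictly between `β m` and
`β i` are then the `m - i - 1` beta numbers of the rows in between together with the co-beta
numbers of the cells of row `i` with hook at most `k`, so `m = i + 1 + k - 𝔭(μ)_i`.
Thus `𝔭(μ)` determines `β` by downward recursion, which gives injectivity; conversely, for a
`k`-bounded partition `f` the same recursion defines a strictly decreasing sequence, the beta
numbers of a core `μ` with `𝔭(μ) = f`.
-/

namespace YoungDiagram

variable (μ : YoungDiagram)

def beta (i : ℕ) : ℤ := μ.rowLen i - i

def coBeta (j : ℕ) : ℤ := j + 1 - μ.colLen j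

theorem beta_strictAnti : StrictAnti μ.beta :=
  strictAnti_nat_of_succ_lt fun i => by
    have := μ.rowLen_anti i (i + 1) i.le_succ
    simp only [beta]
    omega

theorem coBeta_strictMono : StrictMono μ.coBeta :=
  strictMono_nat_of_lt_succ fun j => by
    have := μ.colLen_anti j (j + 1) j.le_succ
    simp only [coBeta]
    omega

variable {μ}

theorem rowLen_eq_zero_of_colLen_le {i : ℕ} (hi : μ.colLen 0 ≤ i) : μ.rowLen i = 0 :=
  Nat.eq_zero_of_not_pos fun h => (mem_iff_lt_colLen.mp (mem_iff_lt_rowLen.mpr h)).not_ge hi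

theorem beta_of_colLen_le {i : ℕ} (hi : μ.colLen 0 ≤ i) : μ.beta i = -i := by
  simp [beta, rowLen_eq_zero_of_colLen_le hi]

theorem coBeta_lt_beta_of_mem {i j : ℕ} (h : (i, j) ∈ μ) : μ.coBeta j < μ.beta i := by
  have h₁ := mem_iff_lt_rowLen.mp h
  have h₂ := mem_iff_lt_colLen.mp h
  simp only [beta, coBeta]
  omega

theorem beta_lt_coBeta_of_notMem {i j : ℕ} (h : (i, j) ∉ μ) : μ.beta i < μ.coBeta j := by
  have h₁ := mt mem_iff_lt_rowLen.mpr h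
  have h₂ := mt mem_iff_lt_colLen.mpr h
  simp only [beta, coBeta]
  omega

theorem coBeta_lt_beta_iff {i j : ℕ} : μ.coBeta j < μ.beta i ↔ (i, j) ∈ μ :=
  ⟨fun h => by_contra fun h' => (beta_lt_coBeta_of_notMem h').not_gt h,
    coBeta_lt_beta_of_mem⟩

variable (μ) in
theorem beta_ne_coBeta (i j : ℕ) : μ.beta i ≠ μ.coBeta j := by
  by_cases h : (i, j) ∈ μ
  · exact (coBeta_lt_beta_of_mem h).ne'
  · exact (beta_lt_coBeta_of_notMem h).ne

theorem hook_eq_beta_sub_coBeta {i j : ℕ} (h : (i, j) ∈ μ) :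
    (μ.hook (i, j) : ℤ) = μ.beta i - μ.coBeta j := by
  have h₁ := mem_iff_lt_rowLen.mp h
  have h₂ := mem_iff_lt_colLen.mp h
  simp only [hook, beta, coBeta]
  omega

/-- The first row `m` with `β m ≤ x` either has `β m = x`, or else `x` is the co-beta number of
column `x + m - 1`, whose last cell lies in row `m - 1`. -/
theorem exists_beta_or_coBeta (x : ℤ) : (∃ i, μ.beta i = x) ∨ ∃ j, μ.coBeta j = x := by
  have hex : ∃ m, μ.beta m ≤ x :=
    ⟨μ.colLen 0 + x.natAbs, by rw [beta_of_colLen_le (by omega)]; omega⟩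
  obtain ⟨m, hm, hmin⟩ : ∃ m, μ.beta m ≤ x ∧ ∀ m' < m, x < μ.beta m' :=
    ⟨Nat.find hex, Nat.find_spec hex, fun _ h => not_le.mp (Nat.find_min hex h)⟩
  rcases hm.eq_or_lt with hm | hm
  · exact .inl ⟨m, hm⟩
  right
  have hx : 0 < x + m := by simp only [beta] at hm; omega
  refine ⟨(x + m - 1).toNat, ?_⟩
  have hcol : μ.colLen (x + m - 1).toNat = m := by
    simp only [beta] at hm
    apply le_antisymm
    · by_contra h
      have := mem_iff_lt_rowLen.mp (mem_iff_lt_colLen.mpr (not_le.mp h))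
      omega
    · rcases Nat.eq_zero_or_pos m with h0 | h0
      · omega
      have hprev := hmin (m - 1) (by omega)
      simp only [beta] at hprev
      have := mem_iff_lt_colLen.mp
        (mem_iff_lt_rowLen.mpr (show (x + m - 1).toNat < μ.rowLen (m - 1) by omega))
      omega
  simp only [coBeta, hcol]
  omega

theorem isCore_iff_forall_exists_beta_eq {t : ℕ} :
    μ.IsCore t ↔ ∀ i, ∃ m, μ.beta m = μ.beta i - t := by
  constructor
  · intro h i
    rcases exists_beta_or_coBeta (μ := μ) (μ.beta i - t) with hm | ⟨j, hj⟩
    · exact hm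
    have hmem := coBeta_lt_beta_iff.mp (lt_of_le_of_ne (by omega) (μ.beta_ne_coBeta i j).symm)
    have := hook_eq_beta_sub_coBeta hmem
    exact absurd (by omega) (h (i, j) hmem)
  · rintro h ⟨i, j⟩ hmem hhook
    obtain ⟨m, hm⟩ := h i
    have := hook_eq_beta_sub_coBeta hmem
    rw [hhook] at this
    exact μ.beta_ne_coBeta m j (by omega)

theorem beta_injective : Function.Injective (beta : YoungDiagram → ℕ → ℤ) := by
  intro μ ν h
  ext ⟨i, j⟩
  have : μ.rowLen i = ν.rowLen i := by
    have := congrFun h i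
    simp only [beta] at this
    omega
  rw [mem_cells, mem_cells, mem_iff_lt_rowLen, mem_iff_lt_rowLen, this]

theorem exists_rowLen_eq {l : ℕ → ℕ} (hl : Antitone l) {N : ℕ} (hN : ∀ i ≥ N, l i = 0) :
    ∃ μ : YoungDiagram, ∀ i, μ.rowLen i = l i := by
  have hsorted : ((List.range N).map l).Pairwise (· ≥ ·) :=
    List.pairwise_le_range.map l fun _ _ h => hl h
  refine ⟨ofRowLens _ hsorted.sortedGE, fun i => eq_of_forall_lt_iff fun j => ?_⟩
  rw [← mem_iff_lt_rowLen, mem_ofRowLens]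
  simp only [List.length_map, List.length_range, List.getElem_map, List.getElem_range]
  refine ⟨fun ⟨_, h⟩ => h, fun h => ⟨?_, h⟩⟩
  by_contra hi
  rw [hN i (by omega)] at h
  omega

theorem exists_beta_eq {b : ℕ → ℤ} (hb : StrictAnti b) {N : ℕ} (hN : ∀ i ≥ N, b i = -i) :
    ∃ μ : YoungDiagram, μ.beta = b := by
  have hanti : Antitone fun i => b i + i :=
    antitone_nat_of_succ_le fun i => by have := hb (Nat.lt_add_one i); push_cast; omega
  have hnonneg (i : ℕ) : 0 ≤ b i + i := by
    have h := hanti (le_max_left i N)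
    simp only [hN _ (le_max_right i N)] at h
    omega
  obtain ⟨μ, hμ⟩ := exists_rowLen_eq (l := fun i => (b i + i).toNat)
    (fun i j h => Int.toNat_le_toNat (hanti h)) (N := N) fun i hi => by simp [hN i hi]
  refine ⟨μ, funext fun i => ?_⟩
  have := hnonneg i
  simp only [beta, hμ]
  omega

end YoungDiagram

open YoungDiagram

theorem pMap_eq_zero_of_colLen_le (k : ℕ) {μ : YoungDiagram} {i : ℕ} (hi : μ.colLen 0 ≤ i) :
    pMap k μ i = 0 := by
  simp [pMap, rowLen_eq_zero_of_colLen_le hi]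

/-- The `k` integers strictly between `β m` and `β i` are the beta numbers of the rows strictly
between `i` and `m` and the co-beta numbers of the cells of row `i` with hook at most `k`. -/
theorem pMap_add_eq_of_beta_eq {k : ℕ} {μ : YoungDiagram} {i m : ℕ}
    (hm : μ.beta m = μ.beta i - (k + 1)) : pMap k μ i + (m - (i + 1)) = k := by
  set cells := (Finset.range (μ.rowLen i)).filter fun j => μ.hook (i, j) ≤ k
  have hsplit : Finset.Ioo (μ.beta m) (μ.beta i) =
      (Finset.Ioo i m).image μ.beta ∪ cells.image μ.coBeta := by
    ext x
    simp only [Finset.mem_Ioo, Finset.mem_union, Finset.mem_image, Finset.mem_filter,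
      Finset.mem_range, cells]
    constructor
    · rintro ⟨h₁, h₂⟩
      rcases exists_beta_or_coBeta (μ := μ) x with ⟨l, rfl⟩ | ⟨j, rfl⟩
      · exact .inl
          ⟨l, ⟨μ.beta_strictAnti.lt_iff_gt.mp h₂, μ.beta_strictAnti.lt_iff_gt.mp h₁⟩, rfl⟩
      · have hmem := coBeta_lt_beta_iff.mp h₂
        have := hook_eq_beta_sub_coBeta hmem
        exact .inr ⟨j, ⟨mem_iff_lt_rowLen.mp hmem, by omega⟩, rfl⟩
    · rintro (⟨l, ⟨h₁, h₂⟩, rfl⟩ | ⟨j, ⟨h₁, h₂⟩, rfl⟩)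
      · exact ⟨μ.beta_strictAnti h₂, μ.beta_strictAnti h₁⟩
      · have hmem := mem_iff_lt_rowLen.mpr h₁
        have := hook_eq_beta_sub_coBeta hmem
        have := coBeta_lt_beta_of_mem hmem
        omega
  have hdisj : Disjoint ((Finset.Ioo i m).image μ.beta) (cells.image μ.coBeta) := by
    simp only [Finset.disjoint_left, Finset.mem_image]
    rintro _ ⟨l, -, rfl⟩ ⟨j, -, h⟩
    exact μ.beta_ne_coBeta l j h.symm
  have hcard := congrArg Finset.card hsplit
  rw [Finset.card_union_of_disjoint hdisj,
    Finset.card_image_of_injective _ μ.beta_strictAnti.injective,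
    Finset.card_image_of_injective _ μ.coBeta_strictMono.injective, Int.card_Ioo,
    Nat.card_Ioo] at hcard
  have hi : i < m := μ.beta_strictAnti.lt_iff_gt.mp (by omega)
  change cells.card + _ = k
  omega

/-- For a core `μ` with `pMap k μ = f`, the row whose beta number is `k + 1` below that of
row `i`. -/
def coreStep (k : ℕ) (f : ℕ → ℕ) (i : ℕ) : ℕ := i + 1 + (k - f i)

theorem lt_coreStep {k : ℕ} {f : ℕ → ℕ} {i : ℕ} : i < coreStep k f i := by
  simp only [coreStep]
  omega

theorem coreStep_strictMono {k : ℕ} {f : ℕ → ℕ} (hf : Antitone f) (hle : ∀ i, f i ≤ k) :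
    StrictMono (coreStep k f) :=
  strictMono_nat_of_lt_succ fun i => by
    have := hf (Nat.le_add_right i 1)
    have := hle i
    simp only [coreStep]
    omega

theorem isCore_and_pMap_eq_iff {k : ℕ} {f : ℕ → ℕ} (hle : ∀ i, f i ≤ k) {μ : YoungDiagram} :
    μ.IsCore (k + 1) ∧ pMap k μ = f ↔
      ∀ i, μ.beta (coreStep k f i) = μ.beta i - (k + 1) := by
  rw [isCore_iff_forall_exists_beta_eq]
  push_cast
  constructor
  · rintro ⟨hcore, rfl⟩ i
    obtain ⟨m, hm⟩ := hcore i
    have hi : i < m := μ.beta_strictAnti.lt_iff_gt.mp (by omega)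
    have := pMap_add_eq_of_beta_eq hm
    rwa [show coreStep k (pMap k μ) i = m by simp only [coreStep]; omega]
  · intro h
    refine ⟨fun i => ⟨_, h i⟩, funext fun i => ?_⟩
    have hpMap := pMap_add_eq_of_beta_eq (h i)
    have := hle i
    simp only [coreStep] at hpMap
    omega

theorem pMap_le_of_isCore {k : ℕ} {μ : YoungDiagram} (hμ : μ.IsCore (k + 1)) (i : ℕ) :
    pMap k μ i ≤ k := by
  rw [isCore_iff_forall_exists_beta_eq] at hμ
  obtain ⟨m, hm⟩ := hμ i
  have := pMap_add_eq_of_beta_eq (m := m) (by push_cast at hm; exact hm)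
  omega

theorem beta_coreStep_pMap {k : ℕ} {μ : YoungDiagram} (hμ : μ.IsCore (k + 1)) (i : ℕ) :
    μ.beta (coreStep k (pMap k μ) i) = μ.beta i - (k + 1) :=
  (isCore_and_pMap_eq_iff (pMap_le_of_isCore hμ)).mp ⟨hμ, rfl⟩ i

theorem antitone_of_strictAnti_comp_coreStep {k : ℕ} {f : ℕ → ℕ} (hle : ∀ i, f i ≤ k)
    {b : ℕ → ℤ} (hb : StrictAnti b) {c : ℤ} (h : ∀ i, b (coreStep k f i) = b i - c) :
    Antitone f :=
  antitone_nat_of_succ_le fun i => by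
    have hstep : coreStep k f i < coreStep k f (i + 1) :=
      hb.lt_iff_gt.mp (by rw [h, h]; linarith [hb (Nat.lt_add_one i)])
    have := hle i
    have := hle (i + 1)
    simp only [coreStep] at hstep
    omega

theorem eq_of_comp_eq_sub {t : ℕ → ℕ} (ht : ∀ i, i < t i) {b b' : ℕ → ℤ} {c : ℤ}
    (hb : ∀ i, b (t i) = b i - c) (hb' : ∀ i, b' (t i) = b' i - c) {N : ℕ}
    (hN : ∀ i ≥ N, b i = b' i) : b = b' := by
  suffices ∀ d i, N ≤ i + d → b i = b' i from funext fun i => this N i (by omega)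
  intro d
  induction d with
  | zero => exact fun i hi => hN i (by omega)
  | succ d ih =>
    intro i hi
    have := ih (t i) (by have := ht i; omega)
    have := hb i
    have := hb' i
    omega

theorem strictAnti_of_comp_eq_sub {t : ℕ → ℕ} (ht : ∀ i, i < t i) (htm : StrictMono t)
    {b : ℕ → ℤ} {c : ℤ} (hb : ∀ i, b (t i) = b i - c) {N : ℕ}
    (hN : ∀ i ≥ N, b (i + 1) < b i) : StrictAnti b := by
  suffices ∀ d i, N ≤ i + d → b (i + 1) < b i from
    strictAnti_nat_of_succ_lt fun i => this N i (by omega)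
  intro d
  induction d with
  | zero => exact fun i hi => hN i (by omega)
  | succ d ih =>
    intro i hi
    have : b (t (i + 1)) < b (t i) :=
      Nat.rel_of_forall_rel_succ_of_le_of_lt (· > ·) (fun j hj => ih j (by omega))
        (Nat.succ_le_of_lt (ht i)) (htm (Nat.lt_add_one i))
    have := hb i
    have := hb (i + 1)
    omega

/-- The beta numbers of the core `μ` with `pMap k μ = f`, for `f` vanishing from `N` on. -/
def coreBeta (k N : ℕ) (f : ℕ → ℕ) (i : ℕ) : ℤ :=
  if h : N ≤ i then -i else coreBeta k N f (coreStep k f i) + (k + 1)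
termination_by N - i
decreasing_by simp only [coreStep]; omega

theorem coreBeta_of_le {k N : ℕ} {f : ℕ → ℕ} {i : ℕ} (hi : N ≤ i) : coreBeta k N f i = -i := by
  rw [coreBeta, dif_pos hi]

theorem coreBeta_coreStep {k N : ℕ} {f : ℕ → ℕ} (hN : ∀ i ≥ N, f i = 0) (i : ℕ) :
    coreBeta k N f (coreStep k f i) = coreBeta k N f i - (k + 1) := by
  by_cases hi : N ≤ i
  · rw [coreBeta_of_le hi, coreBeta_of_le (hi.trans lt_coreStep.le)]
    simp only [coreStep, hN i hi, Nat.sub_zero]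
    push_cast
    ring
  · rw [coreBeta.eq_1 k N f i, dif_neg hi]
    ring

theorem pMap_bijOn_cores_kBounded_general (k : ℕ) :
    Set.BijOn (pMap k) {μ : YoungDiagram | μ.IsCore (k + 1)}
      {f : ℕ → ℕ | Antitone f ∧ (∀ i, f i ≤ k) ∧ ∃ N, ∀ i ≥ N, f i = 0} := by
  refine ⟨fun μ hμ => ?_, fun μ hμ ν hν h => ?_, fun f ⟨hanti, hle, N, hN⟩ => ?_⟩
  · exact ⟨antitone_of_strictAnti_comp_coreStep (pMap_le_of_isCore hμ) μ.beta_strictAnti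
      (beta_coreStep_pMap hμ), pMap_le_of_isCore hμ, μ.colLen 0,
      fun i hi => pMap_eq_zero_of_colLen_le k hi⟩
  · have hν' : ∀ i, ν.beta (coreStep k (pMap k μ) i) = ν.beta i - (k + 1) := by
      rw [h]
      exact beta_coreStep_pMap hν
    refine beta_injective (eq_of_comp_eq_sub (fun _ => lt_coreStep) (beta_coreStep_pMap hμ) hν'
      (N := max (μ.colLen 0) (ν.colLen 0)) fun i hi => ?_)
    rw [beta_of_colLen_le (le_of_max_le_left hi), beta_of_colLen_le (le_of_max_le_right hi)]
  · have hshift := coreBeta_coreStep (k := k) hN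
    obtain ⟨μ, hμ⟩ := exists_beta_eq
      (strictAnti_of_comp_eq_sub (fun _ => lt_coreStep) (coreStep_strictMono hanti hle) hshift
        (N := N) fun i hi => by rw [coreBeta_of_le hi, coreBeta_of_le (by omega)]; omega)
      fun i hi => coreBeta_of_le hi
    exact ⟨μ, (isCore_and_pMap_eq_iff hle).mpr (hμ ▸ hshift)⟩

/-- The Lapointe–Morse map `𝔭` is a bijection from the set of
`(k+1)`-cores onto the set of `k`-bounded partitions (non-increasing, eventually zero
sequences all of whose parts are at most `k`). -/
theorem pMap_bijOn_cores_kBounded (k : ℕ) (hk : 1 ≤ k) :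
    Set.BijOn (pMap k) {μ : YoungDiagram | μ.IsCore (k + 1)}
      {f : ℕ → ℕ | Antitone f ∧ (∀ i, f i ≤ k) ∧ ∃ N, ∀ i ≥ N, f i = 0} :=
  pMap_bijOn_cores_kBounded_general k
end
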